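/- arXiv:1404.2778 — 5 statements merged into one kernel-verified Lean document; each statement's English description precedes it below -/
import Mathlib

section
/- Let f : E → ℝⁿ be a continuous, open, discrete map on a domain E containing x, and define l(x,r) = inf_{|y-x|=r} |f(y)-f(x)| and L(x,r) = sup_{|y-x|=r} |f(y)-f(x)|. Then there exists R > 0 such that both r ↦ L(x,r) and r ↦ l(x,r) are increasing on (0,R). -/
open Metric Set

lemma aux_pts {n : ℕ} {f : EuclideanSpace ℝ (Fin n) → EuclideanSpace ℝ (Fin n)}
    {U : Set (EuclideanSpace ℝ (Fin n))} (hU : IsOpen (f '' U))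
    {y0 a : EuclideanSpace ℝ (Fin n)} (hy0 : y0 ∈ U) (hne : f y0 ≠ a) :
    (∃ y ∈ U, ‖f y - a‖ < ‖f y0 - a‖) ∧ (∃ y ∈ U, ‖f y0 - a‖ < ‖f y - a‖) := by
  set d := ‖f y0 - a‖ with hd_def
  have hd : 0 < d := norm_pos_iff.2 (sub_ne_zero.2 hne)
  obtain ⟨τ, hτ, hball⟩ := Metric.isOpen_iff.1 hU (f y0) ⟨y0, hy0, rfl⟩
  set t : ℝ := min (1/2) (τ/(2*d)) with ht_def
  have ht0 : 0 < t := lt_min (by norm_num) (by positivity)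
  have ht2 : t ≤ 1/2 := min_le_left _ _
  have htd : t * d < τ := by
    have : t ≤ τ/(2*d) := min_le_right _ _
    calc t * d ≤ (τ/(2*d)) * d := by nlinarith
    _ = τ/2 := by field_simp
    _ < τ := by linarith
  constructor
  · obtain ⟨y, hyU, hfy⟩ : f y0 + t • (a - f y0) ∈ f '' U := by
      apply hball
      rw [mem_ball, dist_eq_norm]
      have : f y0 + t • (a - f y0) - f y0 = t • (a - f y0) := by abel
      rw [this, norm_smul, norm_sub_rev]
      simpa [abs_of_pos ht0] using htd
    refine ⟨y, hyU, ?_⟩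
    have hz : f y - a = (1 - t) • (f y0 - a) := by rw [hfy]; module
    rw [hz, norm_smul, Real.norm_eq_abs]
    have : |1 - t| = 1 - t := abs_of_pos (by linarith)
    rw [this]
    nlinarith
  · obtain ⟨y, hyU, hfy⟩ : f y0 + t • (f y0 - a) ∈ f '' U := by
      apply hball
      rw [mem_ball, dist_eq_norm]
      have : f y0 + t • (f y0 - a) - f y0 = t • (f y0 - a) := by abel
      rw [this, norm_smul]
      simpa [abs_of_pos ht0] using htd
    refine ⟨y, hyU, ?_⟩
    have hz : f y - a = (1 + t) • (f y0 - a) := by rw [hfy]; module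
    rw [hz, norm_smul, Real.norm_eq_abs]
    have : |1 + t| = 1 + t := abs_of_pos (by linarith)
    rw [this]
    nlinarith

/-- For a continuous, open, discrete map `f` on a domain `E ∋ x`, the maximal and
minimal modulus functions `L(x,r)` and `l(x,r)` over spheres `|y - x| = r` are
increasing on some interval `(0, R)`. -/
theorem stmt0 {n : ℕ} (hn : 2 ≤ n) (E : Set (EuclideanSpace ℝ (Fin n)))
    (hEopen : IsOpen E) (hEconn : IsConnected E)
    (f : EuclideanSpace ℝ (Fin n) → EuclideanSpace ℝ (Fin n))
    (hf : ContinuousOn f E)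
    (hopen : ∀ U ⊆ E, IsOpen U → IsOpen (f '' U))
    (hdisc : ∀ y : EuclideanSpace ℝ (Fin n), DiscreteTopology ↥(E ∩ f ⁻¹' {y}))
    (x : EuclideanSpace ℝ (Fin n)) (hx : x ∈ E) :
    ∃ R > 0,
      MonotoneOn (fun r => sSup ((fun y => ‖f y - f x‖) '' Metric.sphere x r)) (Set.Ioo 0 R) ∧
      MonotoneOn (fun r => sInf ((fun y => ‖f y - f x‖) '' Metric.sphere x r)) (Set.Ioo 0 R) := by
  classical
  haveI : Nonempty (Fin n) := ⟨⟨0, by omega⟩⟩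
  set g : EuclideanSpace ℝ (Fin n) → ℝ := fun y => ‖f y - f x‖ with hg_def
  have hg : ContinuousOn g E := (hf.sub continuousOn_const).norm
  have hg0 : ∀ y, 0 ≤ g y := fun y => norm_nonneg _
  have hsph : ∀ r : ℝ, 0 ≤ r → (sphere x r).Nonempty := fun r hr =>
    NormedSpace.sphere_nonempty.2 hr
  -- discreteness gives an isolated preimage point
  obtain ⟨ε, hε, hεx⟩ : ∃ ε > 0, ∀ y, y ∈ E → f y = f x → dist y x < ε → y = x := by
    have h := discreteTopology_subtype_iff.mp (hdisc (f x)) x ⟨hx, rfl⟩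
    rw [Filter.inf_principal_eq_bot, mem_nhdsWithin] at h
    obtain ⟨U, hUopen, hxU, hU⟩ := h
    obtain ⟨ε, hε, hball⟩ := Metric.isOpen_iff.1 hUopen x hxU
    refine ⟨ε, hε, fun y hyE hyf hdy => ?_⟩
    by_contra hne
    exact hU ⟨hball (mem_ball.2 hdy), hne⟩ ⟨hyE, by simp [hyf]⟩
  obtain ⟨ρ, hρ, hρE⟩ : ∃ ρ > 0, closedBall x ρ ⊆ E := by
    obtain ⟨ρ, hρ, h⟩ := Metric.isOpen_iff.1 hEopen x hx
    exact ⟨ρ/2, by linarith, fun y hy =>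
      h (mem_ball.2 (lt_of_le_of_lt (mem_closedBall.1 hy) (by linarith)))⟩
  set R0 : ℝ := min ρ (ε/2) with hR0_def
  have hR0 : 0 < R0 := lt_min hρ (by linarith)
  have hR0E : closedBall x R0 ⊆ E := fun y hy =>
    hρE (closedBall_subset_closedBall (min_le_left _ _) hy)
  have hfib : ∀ y ∈ closedBall x R0, f y = f x → y = x := fun y hy hf' =>
    hεx y (hR0E hy) hf'
      (lt_of_le_of_lt (mem_closedBall.1 hy) (lt_of_le_of_lt (min_le_right _ _) (by linarith)))
  have hgpos : ∀ y ∈ closedBall x R0, y ≠ x → 0 < g y := by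
    intro y hy hne
    rcases (hg0 y).lt_or_eq with h | h
    · exact h
    · exact absurd (hfib y hy (sub_eq_zero.1 (norm_eq_zero.1 h.symm))) hne
  have hfne : ∀ y ∈ closedBall x R0, 0 < g y → f y ≠ f x := by
    intro y _ hy h
    rw [hg_def] at hy
    simp only [h, sub_self, norm_zero] at hy
    exact lt_irrefl 0 hy
  -- δ : minimum of g on the sphere of radius R0
  obtain ⟨yδ, hyδ, hyδmin⟩ := (isCompact_sphere x R0).exists_isMinOn (hsph _ hR0.le)
    (hg.mono (fun y hy => hR0E (sphere_subset_closedBall hy)))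
  set δ := g yδ with hδ_def
  have hδ : 0 < δ := by
    refine hgpos yδ (sphere_subset_closedBall hyδ) ?_
    intro h
    rw [h, mem_sphere, dist_self] at hyδ
    exact absurd hyδ.symm (ne_of_gt hR0)
  -- continuity: g < δ near x
  obtain ⟨η, hη, hηδ⟩ : ∃ η > 0, ∀ y, dist y x < η → g y < δ := by
    have hc : ContinuousAt f x := hf.continuousAt (hEopen.mem_nhds hx)
    have hcg : ContinuousAt g x := (hc.sub continuousAt_const).norm
    have hev : ∀ᶠ y in nhds x, g y < δ :=
      hcg (Iio_mem_nhds (by simpa [hg_def] using hδ))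
    exact Metric.eventually_nhds_iff.1 hev
  set R : ℝ := min R0 η / 2 with hR_def
  have hRpos : 0 < R := by positivity
  have hRR0 : R < R0 := by
    have : min R0 η ≤ R0 := min_le_left _ _
    simp only [hR_def]; linarith
  have hRη : R < η := by
    have : min R0 η ≤ η := min_le_right _ _
    simp only [hR_def]; linarith
  refine ⟨R, hRpos, ?_, ?_⟩
  -- Part 1 : L increasing
  · intro r1 hr1 r2 hr2 h12
    show sSup (g '' sphere x r1) ≤ sSup (g '' sphere x r2)
    have hr2R0 : r2 < R0 := lt_trans hr2.2 hRR0
    have hKE : closedBall x r2 ⊆ E := fun y hy =>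
      hR0E (closedBall_subset_closedBall hr2R0.le hy)
    obtain ⟨y0, hy0, hy0max⟩ := (isCompact_closedBall x r2).exists_isMaxOn
      (nonempty_closedBall.2 hr2.1.le) (hg.mono hKE)
    have hy0sph : dist y0 x = r2 := by
      by_contra hne
      have hy0ball : y0 ∈ ball x r2 := mem_ball.2 ((mem_closedBall.1 hy0).lt_of_ne hne)
      have hfney0 : f y0 ≠ f x := by
        intro h
        obtain ⟨y1, hy1⟩ := hsph r1 hr1.1.le
        have hy1cb : y1 ∈ closedBall x r2 :=
          closedBall_subset_closedBall h12 (sphere_subset_closedBall hy1)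
        have h1 : g y1 ≤ g y0 := hy0max hy1cb
        have h0 : g y0 = 0 := by simp [hg_def, h]
        have hy1pos : 0 < g y1 := by
          refine hgpos y1 (closedBall_subset_closedBall hr2R0.le hy1cb) ?_
          intro hxy; rw [hxy, mem_sphere, dist_self] at hy1
          exact absurd hy1.symm (ne_of_gt hr1.1)
        linarith
      obtain ⟨-, y, hyU, hylt⟩ := aux_pts
        (hopen (ball x r2) (fun z hz => hKE (ball_subset_closedBall hz)) isOpen_ball)
        hy0ball hfney0
      exact absurd (hy0max (ball_subset_closedBall hyU)) (not_le.2 hylt)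
    have hbdd2 : BddAbove (g '' sphere x r2) :=
      ((isCompact_sphere x r2).image_of_continuousOn
        (hg.mono (fun y hy => hKE (sphere_subset_closedBall hy)))).bddAbove
    apply csSup_le ((hsph r1 hr1.1.le).image _)
    rintro b ⟨y, hy, rfl⟩
    have h1 : g y ≤ g y0 :=
      hy0max (closedBall_subset_closedBall h12 (sphere_subset_closedBall hy))
    have h2 : g y0 ≤ sSup (g '' sphere x r2) :=
      le_csSup hbdd2 ⟨y0, mem_sphere.2 hy0sph, rfl⟩
    linarith
  -- Part 2 : l increasing
  · intro r1 hr1 r2 hr2 h12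
    show sInf (g '' sphere x r1) ≤ sInf (g '' sphere x r2)
    rcases eq_or_lt_of_le h12 with rfl | hlt
    · exact le_refl _
    set l1 := sInf (g '' sphere x r1) with hl1_def
    have hbdd : BddBelow (g '' sphere x r1) := ⟨0, by rintro b ⟨y, -, rfl⟩; exact hg0 y⟩
    have hl1le : ∀ y ∈ sphere x r1, l1 ≤ g y := fun y hy => csInf_le hbdd ⟨y, hy, rfl⟩
    have hl1δ : l1 < δ := by
      obtain ⟨y1, hy1⟩ := hsph r1 hr1.1.le
      refine lt_of_le_of_lt (hl1le y1 hy1) (hηδ y1 ?_)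
      rw [mem_sphere] at hy1
      rw [hy1]; exact lt_trans hr1.2 hRη
    apply le_csInf ((hsph r2 hr2.1.le).image _)
    rintro b ⟨y2, hy2, rfl⟩
    by_contra hcon
    push_neg at hcon
    rw [mem_sphere] at hy2
    have hr2R0 : r2 < R0 := lt_trans hr2.2 hRR0
    -- the sublevel set and its connected component
    set A : Set (EuclideanSpace ℝ (Fin n)) := ball x R0 ∩ g ⁻¹' (Iio l1) with hA_def
    have hAopen : IsOpen A :=
      (hg.mono (fun y hy => hR0E (ball_subset_closedBall hy))).isOpen_inter_preimage
        isOpen_ball isOpen_Iio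
    have hy2A : y2 ∈ A := ⟨mem_ball.2 (by rw [hy2]; exact hr2R0), hcon⟩
    set C := connectedComponentIn A y2 with hC_def
    have hy2C : y2 ∈ C := mem_connectedComponentIn hy2A
    have hCopen : IsOpen C := hAopen.connectedComponentIn
    have hCA : C ⊆ A := connectedComponentIn_subset _ _
    have hCconn : IsPreconnected C := isPreconnected_connectedComponentIn
    -- C avoids the closed ball of radius r1
    have hCout : C ⊆ (closedBall x r1)ᶜ := by
      have hAr1 : ∀ y ∈ A, dist y x ≠ r1 := by
        intro y hy heq
        exact absurd (hl1le y (mem_sphere.2 heq)) (not_le.2 hy.2)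
      have hsub : C ⊆ ball x r1 ∪ (closedBall x r1)ᶜ := by
        intro y hy
        rcases lt_or_gt_of_ne (hAr1 y (hCA hy)) with h | h
        · exact Or.inl (mem_ball.2 h)
        · exact Or.inr (fun hc => absurd (mem_closedBall.1 hc) (not_le.2 h))
      refine hCconn.subset_right_of_subset_union isOpen_ball
        Metric.isClosed_closedBall.isOpen_compl ?_ hsub ⟨y2, hy2C, ?_⟩
      · exact disjoint_compl_right.mono_left ball_subset_closedBall
      · intro hc
        exact absurd (mem_closedBall.1 hc) (not_le.2 (by rw [hy2]; exact hlt))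
    have hCball : C ⊆ ball x R0 := fun y hy => (hCA hy).1
    have hKcb : closure C ⊆ closedBall x R0 :=
      closure_minimal (fun y hy => ball_subset_closedBall (hCball hy)) Metric.isClosed_closedBall
    have hKE : closure C ⊆ E := fun y hy => hR0E (hKcb hy)
    have hKout : closure C ⊆ (ball x r1)ᶜ :=
      closure_minimal (fun y hy hc => hCout hy (ball_subset_closedBall hc))
        isOpen_ball.isClosed_compl
    have hKnex : ∀ y ∈ closure C, y ≠ x := by
      intro y hy h
      exact hKout hy (by rw [h]; exact mem_ball_self hr1.1)
    have hKgpos : ∀ y ∈ closure C, 0 < g y := fun y hy =>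
      hgpos y (hKcb hy) (hKnex y hy)
    have hKle : ∀ y ∈ closure C, g y ≤ l1 := by
      have hclosed : IsClosed (closedBall x R0 ∩ g ⁻¹' (Iic l1)) :=
        (hg.mono hR0E).preimage_isClosed_of_isClosed Metric.isClosed_closedBall isClosed_Iic
      intro y hy
      have hsub : closure C ⊆ closedBall x R0 ∩ g ⁻¹' (Iic l1) :=
        closure_minimal (fun z hz =>
          ⟨ball_subset_closedBall (hCball hz), mem_preimage.2 (mem_Iic.2 (le_of_lt (hCA hz).2))⟩) hclosed
      exact (hsub hy).2
    have hKball : closure C ⊆ ball x R0 := by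
      intro y hy
      rcases (mem_closedBall.1 (hKcb hy)).lt_or_eq with h | h
      · exact mem_ball.2 h
      · have hδy : δ ≤ g y := hyδmin (mem_sphere.2 h)
        linarith [hKle y hy, hl1δ]
    -- minimum of g over closure C
    have hKcpt : IsCompact (closure C) :=
      (isCompact_closedBall x R0).of_isClosed_subset isClosed_closure hKcb
    obtain ⟨y0, hy0K, hy0min⟩ := hKcpt.exists_isMinOn ⟨y2, subset_closure hy2C⟩ (hg.mono hKE)
    have hgy0 : g y0 < l1 := lt_of_le_of_lt (hy0min (subset_closure hy2C)) hcon
    have hy0A : y0 ∈ A := ⟨hKball hy0K, hgy0⟩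
    obtain ⟨τ, hτ, hτball⟩ := Metric.isOpen_iff.1 hAopen y0 hy0A
    obtain ⟨c, hcC, hcd⟩ := Metric.mem_closure_iff.1 hy0K τ hτ
    have hy0C : y0 ∈ C := by
      have h1 : ball y0 τ ⊆ connectedComponentIn A c :=
        (convex_ball y0 τ).isPreconnected.subset_connectedComponentIn
          (mem_ball.2 (by rw [dist_comm]; exact hcd)) hτball
      have hEq : C = connectedComponentIn A c := connectedComponentIn_eq hcC
      exact hEq.symm ▸ h1 (mem_ball_self hτ)
    obtain ⟨⟨y, hyC, hylt⟩, -⟩ := aux_pts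
      (hopen C (fun z hz => hKE (subset_closure hz)) hCopen) hy0C
      (hfne y0 (hKcb hy0K) (hKgpos y0 hy0K))
    exact absurd (hy0min (subset_closure hyC)) (not_le.2 hylt)
end

section
/- Let f : ℝⁿ → ℝⁿ be continuous with iterated maximum modulus M^k(R) (M¹(R) = M(R) = sup_{|x|=R}|f(x)|, M^{k+1}(R) = M(M^k(R))) and minimum modulus m(r) = inf_{|x|=r}|f(x)|. Suppose: (a) there exist S > 1 and R > 0 such that S·M^k(r) < m^k(Sr) for all r > R and k ≥ 1; (b) m is increasing on (R,∞) with m(r) > r there; and (c) M^k(R) → ∞ as k → ∞. Then the escaping set I(f) = {x : f^k(x) → ∞} equals the fast escaping set A(f) = {x : ∃ L ∈ ℕ, |f^{k+L}(x)| > M^k(R) for all k ≥ 1}. -/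
open Set Filter

/-- Abstract form of Theorem 1.5(ii): under the hypotheses (a) `S·M^k(r) < m^k(Sr)`,
(b) monotonicity and growth of the minimum modulus, and (c) `M^k(R) → ∞`, the escaping
set `I(f)` equals the fast escaping set `A(f)`. -/
theorem stmt9 {n : ℕ} (hn : 0 < n)
    (f : EuclideanSpace ℝ (Fin n) → EuclideanSpace ℝ (Fin n)) (hf : Continuous f)
    (M m : ℝ → ℝ)
    (hM : ∀ r, M r = sSup ((fun x => ‖f x‖) '' Metric.sphere (0 : EuclideanSpace ℝ (Fin n)) r))
    (hm : ∀ r, m r = sInf ((fun x => ‖f x‖) '' Metric.sphere (0 : EuclideanSpace ℝ (Fin n)) r))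
    (S R : ℝ) (hS : 1 < S) (hR : 0 < R)
    (ha : ∀ r, R < r → ∀ k : ℕ, 1 ≤ k → S * M^[k] r < m^[k] (S * r))
    (hbmono : ∀ r₁ r₂, R < r₁ → r₁ ≤ r₂ → m r₁ ≤ m r₂)
    (hbgrow : ∀ r, R < r → r < m r)
    (hc : Filter.Tendsto (fun k => M^[k] R) Filter.atTop Filter.atTop) :
    {x : EuclideanSpace ℝ (Fin n) |
        Filter.Tendsto (fun k => ‖f^[k] x‖) Filter.atTop Filter.atTop} =
      {x : EuclideanSpace ℝ (Fin n) |
        ∃ L : ℕ, ∀ k : ℕ, 1 ≤ k → M^[k] R < ‖f^[k + L] x‖} := by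
  -- `‖f y‖` is at least the minimum modulus at `‖y‖`.
  have hm_le : ∀ y : EuclideanSpace ℝ (Fin n), m ‖y‖ ≤ ‖f y‖ := by
    intro y
    rw [hm]
    apply csInf_le
    · exact ⟨0, by rintro _ ⟨z, _, rfl⟩; positivity⟩
    · exact ⟨y, by simp [mem_sphere_zero_iff_norm], rfl⟩
  -- iterates of `m` stay above `R` and above the starting point
  have grow : ∀ u, R < u → ∀ k : ℕ, R < m^[k] u ∧ u ≤ m^[k] u := by
    intro u hu k
    induction k with
    | zero => exact ⟨hu, le_refl u⟩
    | succ k ih =>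
      rw [Function.iterate_succ_apply']
      have h1 := hbgrow _ ih.1
      exact ⟨ih.1.trans h1, ih.2.trans h1.le⟩
  -- iterates of `m` are monotone on `(R, ∞)`
  have mono : ∀ u v, R < u → u ≤ v → ∀ k : ℕ, m^[k] u ≤ m^[k] v := by
    intro u v hu huv k
    induction k with
    | zero => exact huv
    | succ k ih =>
      rw [Function.iterate_succ_apply', Function.iterate_succ_apply']
      exact hbmono _ _ (grow u hu k).1 ih
  -- Choose `K` past which the iterated maximum modulus exceeds `R`
  obtain ⟨K, hK⟩ := Filter.eventually_atTop.mp (hc.eventually_gt_atTop R)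
  -- Choose `r` dominating `R` and the first `K` iterated maximum moduli
  set C : ℝ := (Finset.range (K + 1)).sup' (by simp) (fun k => M^[k] R) with hC
  set r : ℝ := max (R + 1) C with hr
  have hrR : R < r := lt_of_lt_of_le (by linarith) (le_max_left _ _)
  have hr0 : 0 < r := hR.trans hrR
  have hrSr : r < S * r := by nlinarith
  have hSrR : R < S * r := hrR.trans hrSr
  have hCle : ∀ k : ℕ, k ≤ K → M^[k] R ≤ r := by
    intro k hk
    exact le_trans (Finset.le_sup' (fun k => M^[k] R)
      (Finset.mem_range.mpr (Nat.lt_succ_of_le hk))) (le_max_right _ _)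
  -- Key comparison: `M^[k] R < m^[k] (S·r)` for all `k`
  have key : ∀ k : ℕ, M^[k] R < m^[k] (S * r) := by
    intro k
    have hge : S * r ≤ m^[k] (S * r) := (grow _ hSrR k).2
    by_cases hk : k ≤ K
    · exact lt_of_le_of_lt (hCle k hk) (lt_of_lt_of_le hrSr hge)
    · push_neg at hk
      set j : ℕ := k - K with hj
      have hjk : j + K = k := Nat.sub_add_cancel hk.le
      have hj1 : 1 ≤ j := Nat.le_sub_of_add_le (by omega)
      set a : ℝ := M^[K] R with haa
      have haR : R < a := hK K le_rfl
      have ha0 : 0 < a := hR.trans haR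
      have hMk : M^[k] R = M^[j] a := by
        rw [haa, ← Function.iterate_add_apply, hjk]
      have h1 : S * M^[j] a < m^[j] (S * a) := ha a haR j hj1
      have hSaR : R < S * a := haR.trans (by nlinarith)
      -- `S*a ≤ m^[K] (S*r)` since `a ≤ r`
      have har : a ≤ r := hCle K le_rfl
      have h2 : S * a ≤ m^[K] (S * r) :=
        le_trans (by nlinarith) (grow _ hSrR K).2
      have h3 : m^[j] (S * a) ≤ m^[k] (S * r) := by
        have := mono (S * a) (m^[K] (S * r)) hSaR h2 j
        rwa [← Function.iterate_add_apply, hjk] at this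
      rw [hMk]
      rcases le_or_gt 0 (M^[j] a) with hpos | hneg
      · have : M^[j] a ≤ S * M^[j] a := by nlinarith
        exact lt_of_le_of_lt this (lt_of_lt_of_le h1 h3)
      · exact hneg.trans (hR.trans (grow _ hSrR k).1)
  ext x
  simp only [mem_setOf_eq]
  constructor
  · -- escaping implies fast escaping
    intro hx
    obtain ⟨L, hL⟩ := Filter.eventually_atTop.mp (hx.eventually_gt_atTop (S * r))
    refine ⟨L, fun k _ => ?_⟩
    have ht : S * r < ‖f^[L] x‖ := hL L le_rfl
    have htR : R < ‖f^[L] x‖ := hSrR.trans ht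
    -- the orbit dominates iterates of `m`
    have chain : ∀ k : ℕ, m^[k] ‖f^[L] x‖ ≤ ‖f^[k + L] x‖ := by
      intro k
      induction k with
      | zero => simp
      | succ k ih =>
        have heq : f^[k + 1 + L] x = f (f^[k + L] x) := by
          rw [show k + 1 + L = (k + L) + 1 by ring, Function.iterate_succ_apply']
        rw [heq, Function.iterate_succ_apply']
        calc m (m^[k] ‖f^[L] x‖) ≤ m ‖f^[k + L] x‖ :=
              hbmono _ _ (grow _ htR k).1 ih
          _ ≤ ‖f (f^[k + L] x)‖ := hm_le _
    calc M^[k] R < m^[k] (S * r) := key k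
      _ ≤ m^[k] ‖f^[L] x‖ := mono _ _ hSrR ht.le k
      _ ≤ ‖f^[k + L] x‖ := chain k
  · -- fast escaping implies escaping
    rintro ⟨L, hL⟩
    rw [Filter.tendsto_atTop]
    intro b
    obtain ⟨N, hN⟩ := Filter.eventually_atTop.mp (hc.eventually_ge_atTop b)
    refine Filter.eventually_atTop.mpr ⟨L + N + 1, fun k hk => ?_⟩
    have h1 : 1 ≤ k - L := by omega
    have h2 : N ≤ k - L := by omega
    have h3 : (k - L) + L = k := by omega
    calc b ≤ M^[k - L] R := hN _ h2
      _ ≤ ‖f^[(k - L) + L] x‖ := (hL _ h1).le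
      _ = ‖f^[k] x‖ := by rw [h3]
end

section
/- Let f : B(0,r') → B(0,r') ⊆ ℝⁿ be continuous with f(0) = 0, and suppose there exist α > 1 and 0 < ρ < 1 such that |z|^α < |f(z)| for all z ∈ B(0,ρ) \ {0}. Suppose x, y ∈ B(0,r') satisfy: f^k(x) ≠ 0 and f^k(y) ≠ 0 for all k, |f^k(y)| < ρ and |f^k(x)| < ρ for all k ≥ j, and |f^{k+1}(y)| < |f^k(x)| < 1 and |f^{k+1}(x)| < |f^k(y)| < 1 for all k ≥ j. Then for all k ≥ j: 1/α < log|f^k(x)| / log|f^k(y)| < α. -/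
open Set Metric

/-- Core logarithmic-comparison argument from the proof of Theorem 1.3(ii), with `N = 1`:
interleaved orbits approaching a Hölder-type superattracting fixed point have
logarithmically comparable rates. -/
theorem stmt10 {n : ℕ} (r' : ℝ) (hr' : 0 < r')
    (f : EuclideanSpace ℝ (Fin n) → EuclideanSpace ℝ (Fin n)) (hf : Continuous f)
    (hmaps : ∀ z, ‖z‖ < r' → ‖f z‖ < r') (hf0 : f 0 = 0)
    (α ρ : ℝ) (hα : 1 < α) (hρ0 : 0 < ρ) (hρ1 : ρ < 1)
    (hHolder : ∀ z : EuclideanSpace ℝ (Fin n), z ≠ 0 → ‖z‖ < ρ → ‖z‖ ^ α < ‖f z‖)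
    (x y : EuclideanSpace ℝ (Fin n)) (hx : ‖x‖ < r') (hy : ‖y‖ < r')
    (hxne : ∀ k : ℕ, f^[k] x ≠ 0) (hyne : ∀ k : ℕ, f^[k] y ≠ 0)
    (j : ℕ)
    (hyρ : ∀ k, j ≤ k → ‖f^[k] y‖ < ρ)
    (hxρ : ∀ k, j ≤ k → ‖f^[k] x‖ < ρ)
    (hinterleave1 : ∀ k, j ≤ k → ‖f^[k + 1] y‖ < ‖f^[k] x‖ ∧ ‖f^[k] x‖ < 1)
    (hinterleave2 : ∀ k, j ≤ k → ‖f^[k + 1] x‖ < ‖f^[k] y‖ ∧ ‖f^[k] y‖ < 1) :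
    ∀ k, j ≤ k →
      1 / α < Real.log ‖f^[k] x‖ / Real.log ‖f^[k] y‖ ∧
      Real.log ‖f^[k] x‖ / Real.log ‖f^[k] y‖ < α := by
  intro k hk
  have hxpos : (0:ℝ) < ‖f^[k] x‖ := norm_pos_iff.mpr (hxne k)
  have hypos : (0:ℝ) < ‖f^[k] y‖ := norm_pos_iff.mpr (hyne k)
  have hx1 := (hinterleave1 k hk).2
  have hy1 := (hinterleave2 k hk).2
  have ha : Real.log ‖f^[k] x‖ < 0 := Real.log_neg hxpos hx1
  have hb : Real.log ‖f^[k] y‖ < 0 := Real.log_neg hypos hy1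
  -- Hölder at f^[k] y
  have hHy : ‖f^[k] y‖ ^ α < ‖f^[k+1] y‖ := by
    have := hHolder (f^[k] y) (hyne k) (hyρ k hk)
    rwa [Function.iterate_succ_apply']
  have hHx : ‖f^[k] x‖ ^ α < ‖f^[k+1] x‖ := by
    have := hHolder (f^[k] x) (hxne k) (hxρ k hk)
    rwa [Function.iterate_succ_apply']
  have hy1pos : (0:ℝ) < ‖f^[k+1] y‖ := norm_pos_iff.mpr (hyne (k+1))
  have hx1pos : (0:ℝ) < ‖f^[k+1] x‖ := norm_pos_iff.mpr (hxne (k+1))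
  have key1 : α * Real.log ‖f^[k] y‖ < Real.log ‖f^[k] x‖ := by
    calc α * Real.log ‖f^[k] y‖ = Real.log (‖f^[k] y‖ ^ α) :=
          (Real.log_rpow hypos α).symm
      _ < Real.log ‖f^[k+1] y‖ :=
          Real.log_lt_log (Real.rpow_pos_of_pos hypos α) hHy
      _ ≤ Real.log ‖f^[k] x‖ :=
          le_of_lt (Real.log_lt_log hy1pos (hinterleave1 k hk).1)
  have key2 : α * Real.log ‖f^[k] x‖ < Real.log ‖f^[k] y‖ := by
    calc α * Real.log ‖f^[k] x‖ = Real.log (‖f^[k] x‖ ^ α) :=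
          (Real.log_rpow hxpos α).symm
      _ < Real.log ‖f^[k+1] x‖ :=
          Real.log_lt_log (Real.rpow_pos_of_pos hxpos α) hHx
      _ ≤ Real.log ‖f^[k] y‖ :=
          le_of_lt (Real.log_lt_log hx1pos (hinterleave2 k hk).1)
  have hα0 : (0:ℝ) < α := lt_trans one_pos hα
  constructor
  · rw [lt_div_iff_of_neg hb, div_mul_eq_mul_div, lt_div_iff₀ hα0]
    nlinarith
  · rw [div_lt_iff_of_neg hb]
    linarith
end

section
/- Fix 1 < K < 2 and consider the model maps φ(r) = A r^{2K} and ψ(r) = B r^{2/K} (A, B > 0) acting on radii. Given any target integers (p_m), (q_m), one can choose sequences r_m ↓ 0 and s_m with r_{m+1} < s_m < r_m and continuity-matching constants A_m, B_m such that the radial orbit ρ_{k+1} = A_m ρ_k^{2K} (while ρ_k ∈ [s_m, r_m)) resp. ρ_{k+1} = B_m ρ_k^{2/K} (while ρ_k ∈ [r_{m+1}, s_m)) spends at least p_m consecutive steps in [s_m,r_m) and at least q_m consecutive steps in [r_{m+1},s_m). Consequently, for a point z with |z| starting in such an orbit, liminf_{k→∞} (1/k) log log(1/ρ_k) ≤ log(2/K)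 and limsup_{k→∞} (1/k) log log(1/ρ_k) ≥ log(2K) can both be achieved simultaneously. -/
open Set Filter

namespace Stmt12Aux

noncomputable section

variable (K : ℝ) (hK1 : 1 < K) (hK2 : K < 2) (p q : ℕ → ℕ)

def lam : ℝ := 2 * K
def mu : ℝ := 2 / K
def LL : ℝ := Real.log (2 * K)
def MM : ℝ := Real.log (2 / K)
def del : ℝ := (mu K - 1) / (lam K - 1)
def Ccon : ℝ := 2 * lam K + (lam K - mu K) / (mu K - 1)
def Cdel : ℕ := ⌈(-Real.log (del K)) / LL K⌉₊
def CCc : ℕ := ⌈Real.log (Ccon K) / LL K⌉₊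

def Pn (m : ℕ) (t : ℝ) : ℕ := p m + 3 + m * (⌈Real.log (t + 1) / MM K⌉₊ + Cdel K + 1)
def Qn (m : ℕ) (t : ℝ) : ℕ := q m + 3 + m * (⌈Real.log (t + 1) / MM K⌉₊ + CCc K + 1)

def tau : ℕ → ℝ
  | 0 => 0
  | m + 1 =>
    lam K ^ Qn K q m (lam K ^ Pn K p m (tau m) * (tau m + 1)) *
      (lam K ^ Pn K p m (tau m) * (tau m + 1) + 1)

def sig (m : ℕ) : ℝ := lam K ^ Pn K p m (tau K p q m) * (tau K p q m + 1)

lemma tau_zero : tau K p q 0 = 0 := rfl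

lemma tau_succ (m : ℕ) :
    tau K p q (m + 1) = lam K ^ Qn K q m (sig K p q m) * (sig K p q m + 1) := rfl

def aa : ℕ → ℝ
  | 0 => 0
  | m + 1 => aa m + (lam K - mu K) * (tau K p q (m + 1) - sig K p q m)

def bb (m : ℕ) : ℝ := aa K p q m - (lam K - mu K) * sig K p q m

def idx (x : ℝ) : ℕ := sInf {m | x < tau K p q (m + 1)}

def ff (x : ℝ) : ℝ :=
  if x < sig K p q (idx K p q x) then lam K * x - aa K p q (idx K p q x)
  else mu K * x - bb K p q (idx K p q x)

def XX : ℕ → ℝ := fun k => (ff K p q)^[k] 1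

variable {K}

section basic

include hK1 hK2

set_option linter.unusedSectionVars false

lemma hK0 : (0:ℝ) < K := by linarith

lemma lam_gt : 2 < lam K := by unfold lam; linarith

lemma lam_pos : 0 < lam K := by have := lam_gt hK1 hK2; linarith

lemma one_lt_lam : 1 < lam K := by have := lam_gt hK1 hK2; linarith

lemma mu_gt : 1 < mu K := by
  unfold mu
  rw [lt_div_iff₀ (hK0 hK1 hK2)]
  linarith

lemma mu_lt2 : mu K < 2 := by
  unfold mu
  rw [div_lt_iff₀ (hK0 hK1 hK2)]
  linarith

lemma mu_pos : 0 < mu K := by have := mu_gt hK1 hK2; linarith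

lemma mu_lt_lam : mu K < lam K := by
  have := mu_lt2 hK1 hK2; have := lam_gt hK1 hK2; linarith

lemma LL_pos : 0 < LL K := Real.log_pos (by have := lam_gt hK1 hK2; unfold lam at this; linarith)

lemma MM_pos : 0 < MM K := Real.log_pos (by have := mu_gt hK1 hK2; unfold mu at this; linarith)

lemma MM_le_LL : MM K ≤ LL K := by
  have h1 := mu_pos hK1 hK2
  have h2 := mu_lt_lam hK1 hK2
  unfold mu at h1
  unfold mu lam at h2
  exact Real.log_le_log h1 h2.le

lemma exp_LL : Real.exp (LL K) = lam K := Real.exp_log (lam_pos hK1 hK2)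

lemma exp_MM : Real.exp (MM K) = mu K := Real.exp_log (mu_pos hK1 hK2)

lemma del_pos : 0 < del K := by
  unfold del
  have h1 := mu_gt hK1 hK2; have h2 := one_lt_lam hK1 hK2
  exact div_pos (by linarith) (by linarith)

lemma del_le_one : del K ≤ 1 := by
  unfold del
  have h1 := mu_lt_lam hK1 hK2; have h2 := one_lt_lam hK1 hK2
  rw [div_le_one (by linarith)]
  linarith

lemma log_del_ge : -((Cdel K : ℝ) * LL K) ≤ Real.log (del K) := by
  have h1 : (-Real.log (del K)) / LL K ≤ (Cdel K : ℝ) := Nat.le_ceil _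
  have h2 := LL_pos hK1 hK2
  rw [div_le_iff₀ h2] at h1
  linarith

lemma Ccon_ge_one : 1 ≤ Ccon K := by
  unfold Ccon
  have h1 := lam_gt hK1 hK2
  have h2 := mu_gt hK1 hK2
  have h3 := mu_lt_lam hK1 hK2
  have h4 : 0 ≤ (lam K - mu K) / (mu K - 1) := div_nonneg (by linarith) (by linarith)
  linarith

lemma log_Ccon_le : Real.log (Ccon K) ≤ (CCc K : ℝ) * LL K := by
  have h1 : Real.log (Ccon K) / LL K ≤ (CCc K : ℝ) := Nat.le_ceil _
  have h2 := LL_pos hK1 hK2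
  rw [div_le_iff₀ h2] at h1
  linarith

lemma one_le_lam_pow (n : ℕ) : 1 ≤ lam K ^ n :=
  one_le_pow₀ (le_of_lt (one_lt_lam hK1 hK2))

lemma tau_nonneg : ∀ m, 0 ≤ tau K p q m := by
  intro m
  induction m with
  | zero => simp [tau_zero]
  | succ n ih =>
    rw [tau_succ]
    have h1 := one_le_lam_pow hK1 hK2 (Pn K p n (tau K p q n))
    have h2 := one_le_lam_pow hK1 hK2 (Qn K q n (sig K p q n))
    have h3 : tau K p q n + 1 ≤ sig K p q n := by
      unfold sig; nlinarith
    nlinarith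

lemma sig_ge (m : ℕ) : tau K p q m + 1 ≤ sig K p q m := by
  have h0 := tau_nonneg hK1 hK2 p q m
  have h1 := one_le_lam_pow hK1 hK2 (Pn K p m (tau K p q m))
  unfold sig; nlinarith

lemma tau_succ_ge (m : ℕ) : sig K p q m + 1 ≤ tau K p q (m + 1) := by
  have h0 := tau_nonneg hK1 hK2 p q m
  have hs := sig_ge hK1 hK2 p q m
  have h1 := one_le_lam_pow hK1 hK2 (Qn K q m (sig K p q m))
  rw [tau_succ]; nlinarith

lemma sig_ge_one (m : ℕ) : 1 ≤ sig K p q m := by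
  have := sig_ge hK1 hK2 p q m; have := tau_nonneg hK1 hK2 p q m; linarith

lemma tau_lt_sig (m : ℕ) : tau K p q m < sig K p q m := by
  have := sig_ge hK1 hK2 p q m; linarith

lemma sig_lt_tau_succ (m : ℕ) : sig K p q m < tau K p q (m + 1) := by
  have := tau_succ_ge hK1 hK2 p q m; linarith

lemma tau_lt_tau_succ (m : ℕ) : tau K p q m < tau K p q (m + 1) := by
  have := tau_lt_sig hK1 hK2 p q m; have := sig_lt_tau_succ hK1 hK2 p q m; linarith

lemma tau_mono : Monotone (tau K p q) :=
  monotone_nat_of_le_succ (fun n => (tau_lt_tau_succ hK1 hK2 p q n).le)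

lemma tau_ge_nat : ∀ m : ℕ, (m : ℝ) ≤ tau K p q m := by
  intro m
  induction m with
  | zero => simp [tau_zero]
  | succ n ih =>
    have h1 := sig_ge hK1 hK2 p q n
    have h2 := tau_succ_ge hK1 hK2 p q n
    push_cast
    linarith

lemma aa_nonneg : ∀ m, 0 ≤ aa K p q m := by
  intro m
  induction m with
  | zero => simp [aa]
  | succ n ih =>
    have h1 := mu_lt_lam hK1 hK2
    have h2 := sig_lt_tau_succ hK1 hK2 p q n
    show 0 ≤ aa K p q n + (lam K - mu K) * (tau K p q (n + 1) - sig K p q n)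
    nlinarith

lemma aa_le : ∀ m, aa K p q m ≤ (lam K - mu K) * tau K p q m := by
  intro m
  induction m with
  | zero => simp [aa, tau_zero]
  | succ n ih =>
    have h1 := mu_lt_lam hK1 hK2
    have h2 := tau_lt_sig hK1 hK2 p q n
    show aa K p q n + (lam K - mu K) * (tau K p q (n + 1) - sig K p q n) ≤ _
    nlinarith

lemma bb_nonpos (m : ℕ) : bb K p q m ≤ 0 := by
  have h1 := aa_le hK1 hK2 p q m
  have h2 := tau_lt_sig hK1 hK2 p q m
  have h3 := mu_lt_lam hK1 hK2
  unfold bb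
  nlinarith

lemma idx_ex (x : ℝ) : ∃ m, x < tau K p q (m + 1) := by
  obtain ⟨n, hn⟩ := exists_nat_gt x
  refine ⟨n, lt_of_lt_of_le hn ?_⟩
  calc (n : ℝ) ≤ (n + 1 : ℕ) := by push_cast; linarith
  _ ≤ tau K p q (n + 1) := tau_ge_nat hK1 hK2 p q (n + 1)

lemma idx_mem (x : ℝ) : x < tau K p q (idx K p q x + 1) :=
  Nat.sInf_mem (idx_ex hK1 hK2 p q x)

omit hK1 hK2 in
lemma idx_le {x : ℝ} {m : ℕ} (h : x < tau K p q (m + 1)) : idx K p q x ≤ m :=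
  Nat.sInf_le h

lemma tau_idx_le {x : ℝ} (hx : 0 ≤ x) : tau K p q (idx K p q x) ≤ x := by
  rcases h : idx K p q x with _ | j
  · rw [tau_zero]; exact hx
  · have hj : j < idx K p q x := by omega
    have := Nat.notMem_of_lt_sInf (s := {m | x < tau K p q (m + 1)}) hj
    simpa using this

lemma idx_eq {x : ℝ} {m : ℕ} (h1 : tau K p q m ≤ x) (h2 : x < tau K p q (m + 1)) :
    idx K p q x = m := by
  refine le_antisymm (idx_le p q h2) ?_
  by_contra hlt
  push_neg at hlt
  have : idx K p q x + 1 ≤ m := hlt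
  have h3 : tau K p q (idx K p q x + 1) ≤ tau K p q m := tau_mono hK1 hK2 p q this
  have h4 := idx_mem hK1 hK2 p q x
  linarith

lemma ff_phi {x : ℝ} {m : ℕ} (h0 : tau K p q m ≤ x) (h1 : x < sig K p q m) :
    ff K p q x = lam K * x - aa K p q m := by
  have he : idx K p q x = m :=
    idx_eq hK1 hK2 p q h0 (h1.trans (sig_lt_tau_succ hK1 hK2 p q m))
  unfold ff
  rw [he, if_pos h1]

lemma ff_psi {x : ℝ} {m : ℕ} (h0 : sig K p q m ≤ x) (h1 : x < tau K p q (m + 1)) :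
    ff K p q x = mu K * x - bb K p q m := by
  have h0' : tau K p q m ≤ x := (tau_lt_sig hK1 hK2 p q m).le.trans h0
  have he : idx K p q x = m := idx_eq hK1 hK2 p q h0' h1
  unfold ff
  rw [he, if_neg (not_lt.mpr h0)]

lemma ff_ge {x : ℝ} (hx : 0 ≤ x) : mu K * x ≤ ff K p q x := by
  set m := idx K p q x with hm
  have ht : tau K p q m ≤ x := tau_idx_le hK1 hK2 p q hx
  have hlam := mu_lt_lam hK1 hK2
  have haa := aa_le hK1 hK2 p q m
  have ha0 := aa_nonneg hK1 hK2 p q m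
  unfold ff
  rw [← hm]
  split_ifs with h
  · nlinarith
  · have hb := bb_nonpos hK1 hK2 p q m
    nlinarith

lemma ff_le {x : ℝ} (hx : 0 ≤ x) : ff K p q x ≤ lam K * x := by
  set m := idx K p q x with hm
  have ht : tau K p q m ≤ x := tau_idx_le hK1 hK2 p q hx
  have hlam := mu_lt_lam hK1 hK2
  have haa := aa_le hK1 hK2 p q m
  have ha0 := aa_nonneg hK1 hK2 p q m
  unfold ff
  rw [← hm]
  split_ifs with h
  · nlinarith
  · push_neg at h
    unfold bb
    nlinarith

omit hK1 hK2 in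
lemma XX_zero : XX K p q 0 = 1 := rfl

omit hK1 hK2 in
lemma XX_succ (k : ℕ) : XX K p q (k + 1) = ff K p q (XX K p q k) :=
  Function.iterate_succ_apply' _ _ _

lemma XX_ge_one : ∀ k, 1 ≤ XX K p q k := by
  intro k
  induction k with
  | zero => simp [XX_zero]
  | succ n ih =>
    rw [XX_succ]
    have h1 := ff_ge hK1 hK2 p q (x := XX K p q n) (by linarith)
    have h2 := mu_gt hK1 hK2
    nlinarith

lemma XX_pos (k : ℕ) : 0 < XX K p q k := lt_of_lt_of_le one_pos (XX_ge_one hK1 hK2 p q k)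

lemma XX_step_ge (k : ℕ) : mu K * XX K p q k ≤ XX K p q (k + 1) := by
  rw [XX_succ]
  exact ff_ge hK1 hK2 p q (by linarith [XX_ge_one hK1 hK2 p q k])

lemma XX_step_le (k : ℕ) : XX K p q (k + 1) ≤ lam K * XX K p q k := by
  rw [XX_succ]
  exact ff_le hK1 hK2 p q (by linarith [XX_ge_one hK1 hK2 p q k])

lemma XX_lt_succ (k : ℕ) : XX K p q k < XX K p q (k + 1) := by
  have h1 := XX_step_ge hK1 hK2 p q k
  have h2 := mu_gt hK1 hK2
  have h3 := XX_pos hK1 hK2 p q k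
  nlinarith

lemma XX_strictMono : StrictMono (XX K p q) :=
  strictMono_nat_of_lt_succ (XX_lt_succ hK1 hK2 p q)

lemma XX_mono : Monotone (XX K p q) := (XX_strictMono hK1 hK2 p q).monotone

lemma XX_le_pow : ∀ k, XX K p q k ≤ lam K ^ k := by
  intro k
  induction k with
  | zero => simp [XX_zero]
  | succ n ih =>
    have h1 := XX_step_le hK1 hK2 p q n
    have h2 := lam_pos hK1 hK2
    calc XX K p q (n + 1) ≤ lam K * XX K p q n := h1
    _ ≤ lam K * lam K ^ n := by nlinarith
    _ = lam K ^ (n + 1) := by ring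

lemma XX_ge_pow : ∀ k, mu K ^ k ≤ XX K p q k := by
  intro k
  induction k with
  | zero => simp [XX_zero]
  | succ n ih =>
    have h1 := XX_step_ge hK1 hK2 p q n
    have h2 := mu_pos hK1 hK2
    calc mu K ^ (n + 1) = mu K * mu K ^ n := by ring
    _ ≤ mu K * XX K p q n := by nlinarith
    _ ≤ XX K p q (n + 1) := h1

lemma XX_add_le (k : ℕ) : ∀ i, XX K p q (k + i) ≤ lam K ^ i * XX K p q k := by
  intro i
  induction i with
  | zero => simp
  | succ n ih =>
    have h1 := XX_step_le hK1 hK2 p q (k + n)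
    have h2 := lam_pos hK1 hK2
    have h3 : 0 ≤ lam K ^ n := by positivity
    calc XX K p q (k + (n + 1)) = XX K p q ((k + n) + 1) := by ring_nf
    _ ≤ lam K * XX K p q (k + n) := h1
    _ ≤ lam K * (lam K ^ n * XX K p q k) := by nlinarith
    _ = lam K ^ (n + 1) * XX K p q k := by ring

lemma entry {c : ℝ} (hc : 1 ≤ c) :
    ∃ k : ℕ, k ≤ ⌈Real.log c / MM K⌉₊ ∧ c ≤ XX K p q k ∧
      XX K p q k ≤ lam K * (c + 1) := by
  have hMM := MM_pos hK1 hK2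
  have hwit : c ≤ XX K p q ⌈Real.log c / MM K⌉₊ := by
    set κ := ⌈Real.log c / MM K⌉₊ with hκ
    have h1 : Real.log c / MM K ≤ (κ : ℝ) := Nat.le_ceil _
    have h2 : Real.log c ≤ (κ : ℝ) * MM K := by
      rw [div_le_iff₀ hMM] at h1; linarith
    calc c = Real.exp (Real.log c) := (Real.exp_log (by linarith)).symm
    _ ≤ Real.exp ((κ : ℝ) * MM K) := Real.exp_le_exp.mpr h2
    _ = mu K ^ κ := by rw [Real.exp_nat_mul, exp_MM hK1 hK2]
    _ ≤ XX K p q κ := XX_ge_pow hK1 hK2 p q κ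
  have hex : ∃ k, c ≤ XX K p q k := ⟨_, hwit⟩
  refine ⟨Nat.find hex, Nat.find_min' hex hwit, Nat.find_spec hex, ?_⟩
  rcases hk : Nat.find hex with _ | j
  · rw [XX_zero]
    have := lam_gt hK1 hK2
    nlinarith
  · have hj : ¬ c ≤ XX K p q j := Nat.find_min hex (by omega)
    push_neg at hj
    have h1 := XX_step_le hK1 hK2 p q j
    have h2 := lam_pos hK1 hK2
    nlinarith

lemma phi_stay (m : ℕ) :
    ∃ k : ℕ, k ≤ ⌈Real.log (tau K p q m + 1) / MM K⌉₊ ∧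
      (∀ i, tau K p q m + 1 ≤ XX K p q (k + i)) ∧
      (∀ i, i + 3 ≤ Pn K p m (tau K p q m) → XX K p q (k + i) < sig K p q m) ∧
      (∀ i, i + 3 ≤ Pn K p m (tau K p q m) →
        lam K ^ i * (del K * (tau K p q m + 1)) ≤ XX K p q (k + i)) := by
  set t := tau K p q m with hT
  have ht0 : 0 ≤ t := tau_nonneg hK1 hK2 p q m
  have hc : (1:ℝ) ≤ t + 1 := by linarith
  obtain ⟨k, hk, hck, hk2⟩ := entry hK1 hK2 p q hc
  have hlam := lam_pos hK1 hK2
  have hlam2 := lam_gt hK1 hK2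
  have h2 : ∀ i, t + 1 ≤ XX K p q (k + i) := fun i =>
    hck.trans (XX_mono hK1 hK2 p q (Nat.le_add_right k i))
  have h3 : ∀ i, i + 3 ≤ Pn K p m t → XX K p q (k + i) < sig K p q m := by
    intro i hi
    have ha := XX_add_le hK1 hK2 p q k i
    have hp : (0:ℝ) < lam K ^ i := by positivity
    have hchain : XX K p q (k + i) ≤ lam K ^ (i + 2) * (t + 1) := by
      calc XX K p q (k + i) ≤ lam K ^ i * XX K p q k := ha
      _ ≤ lam K ^ i * (lam K * (t + 1 + 1)) := by nlinarith
      _ ≤ lam K ^ i * (lam K * (lam K * (t + 1))) := by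
          have hstep : t + 1 + 1 ≤ lam K * (t + 1) := by nlinarith
          have := mul_le_mul_of_nonneg_left hstep (le_of_lt hlam)
          nlinarith
      _ = lam K ^ (i + 2) * (t + 1) := by ring
    have hlt : lam K ^ (i + 2) < lam K ^ Pn K p m t :=
      pow_lt_pow_right₀ (one_lt_lam hK1 hK2) (by omega)
    calc XX K p q (k + i) ≤ lam K ^ (i + 2) * (t + 1) := hchain
    _ < lam K ^ Pn K p m t * (t + 1) := by nlinarith
    _ = sig K p q m := rfl
  refine ⟨k, hk, h2, h3, ?_⟩
  set st := aa K p q m / (lam K - 1) with hst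
  have hlam1 : (0:ℝ) < lam K - 1 := by linarith
  have hsteq : st * (lam K - 1) = aa K p q m := by
    rw [hst]; field_simp
  have haa0 := aa_nonneg hK1 hK2 p q m
  have haale := aa_le hK1 hK2 p q m
  rw [← hT] at haale
  have hst0 : 0 ≤ st := by positivity
  have claim : ∀ i, i + 3 ≤ Pn K p m t →
      lam K ^ i * (t + 1 - st) + st ≤ XX K p q (k + i) := by
    intro i
    induction i with
    | zero => intro _; simpa using hck
    | succ n ih =>
      intro hn
      have ihn := ih (by omega)
      have hreg : XX K p q (k + n) < sig K p q m := h3 n (by omega)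
      have hreg2 : tau K p q m ≤ XX K p q (k + n) := by
        have := h2 n; rw [← hT]; linarith
      have hffeq : XX K p q (k + (n + 1)) = lam K * XX K p q (k + n) - aa K p q m := by
        have : k + (n + 1) = (k + n) + 1 := by omega
        rw [this, XX_succ, ff_phi hK1 hK2 p q hreg2 hreg]
      rw [hffeq]
      have hmul : lam K ^ (n + 1) * (t + 1 - st) + lam K * st ≤ lam K * XX K p q (k + n) := by
        calc lam K ^ (n + 1) * (t + 1 - st) + lam K * st
            = lam K * (lam K ^ n * (t + 1 - st) + st) := by ring
        _ ≤ lam K * XX K p q (k + n) := mul_le_mul_of_nonneg_left ihn (by linarith)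
      nlinarith [hsteq]
  intro i hi
  have hci := claim i hi
  have hdel : del K * (t + 1) ≤ t + 1 - st := by
    have hmu := mu_gt hK1 hK2
    have hml := mu_lt_lam hK1 hK2
    rw [del, div_mul_eq_mul_div, div_le_iff₀ hlam1]
    nlinarith
  have hp : (0:ℝ) ≤ lam K ^ i := by positivity
  calc lam K ^ i * (del K * (t + 1)) ≤ lam K ^ i * (t + 1 - st) := by nlinarith
  _ ≤ XX K p q (k + i) := by linarith

lemma psi_stay (m : ℕ) :
    ∃ k : ℕ, k ≤ ⌈Real.log (sig K p q m + 1) / MM K⌉₊ ∧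
      (∀ i, sig K p q m + 1 ≤ XX K p q (k + i)) ∧
      (∀ i, i + 3 ≤ Qn K q m (sig K p q m) → XX K p q (k + i) < tau K p q (m + 1)) ∧
      (∀ i, i + 3 ≤ Qn K q m (sig K p q m) →
        XX K p q (k + i) ≤ mu K ^ i * (Ccon K * (sig K p q m + 1))) := by
  set s := sig K p q m with hS
  have hs1 : 1 ≤ s := sig_ge_one hK1 hK2 p q m
  have hc : (1:ℝ) ≤ s + 1 := by linarith
  obtain ⟨k, hk, hck, hk2⟩ := entry hK1 hK2 p q hc
  have hlam := lam_pos hK1 hK2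
  have hlam2 := lam_gt hK1 hK2
  have hmu := mu_gt hK1 hK2
  have hml := mu_lt_lam hK1 hK2
  have h2 : ∀ i, s + 1 ≤ XX K p q (k + i) := fun i =>
    hck.trans (XX_mono hK1 hK2 p q (Nat.le_add_right k i))
  have h3 : ∀ i, i + 3 ≤ Qn K q m s → XX K p q (k + i) < tau K p q (m + 1) := by
    intro i hi
    have ha := XX_add_le hK1 hK2 p q k i
    have hp : (0:ℝ) < lam K ^ i := by positivity
    have hchain : XX K p q (k + i) ≤ lam K ^ (i + 2) * (s + 1) := by
      calc XX K p q (k + i) ≤ lam K ^ i * XX K p q k := ha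
      _ ≤ lam K ^ i * (lam K * (s + 1 + 1)) := by nlinarith
      _ ≤ lam K ^ i * (lam K * (lam K * (s + 1))) := by
          have hstep : s + 1 + 1 ≤ lam K * (s + 1) := by nlinarith
          have := mul_le_mul_of_nonneg_left hstep (le_of_lt hlam)
          nlinarith
      _ = lam K ^ (i + 2) * (s + 1) := by ring
    have hlt : lam K ^ (i + 2) < lam K ^ Qn K q m s :=
      pow_lt_pow_right₀ (one_lt_lam hK1 hK2) (by omega)
    calc XX K p q (k + i) ≤ lam K ^ (i + 2) * (s + 1) := hchain
    _ < lam K ^ Qn K q m s * (s + 1) := by nlinarith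
    _ = tau K p q (m + 1) := (tau_succ K p q m).symm
  refine ⟨k, hk, h2, h3, ?_⟩
  set cm := -bb K p q m with hcm
  have hcm0 : 0 ≤ cm := by
    have := bb_nonpos hK1 hK2 p q m; rw [hcm]; linarith
  have hmu1 : (0:ℝ) < mu K - 1 := by linarith
  set W := XX K p q k + cm / (mu K - 1) with hW
  have hid : mu K * (cm / (mu K - 1)) = cm + cm / (mu K - 1) := by
    field_simp; ring
  have claim : ∀ i, i + 3 ≤ Qn K q m s →
      XX K p q (k + i) + cm / (mu K - 1) ≤ mu K ^ i * W := by
    intro i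
    induction i with
    | zero => intro _; simp [hW]
    | succ n ih =>
      intro hn
      have ihn := ih (by omega)
      have hreg : XX K p q (k + n) < tau K p q (m + 1) := h3 n (by omega)
      have hreg2 : s ≤ XX K p q (k + n) := by have := h2 n; linarith
      have hffeq : XX K p q (k + (n + 1)) = mu K * XX K p q (k + n) + cm := by
        have hkn : k + (n + 1) = (k + n) + 1 := by omega
        rw [hkn, XX_succ, ff_psi hK1 hK2 p q hreg2 hreg, hcm]; ring
      rw [hffeq]
      have hmul : mu K * (XX K p q (k + n) + cm / (mu K - 1)) ≤ mu K * (mu K ^ n * W) :=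
        mul_le_mul_of_nonneg_left ihn (by linarith)
      have hmul' : mu K * XX K p q (k + n) + mu K * (cm / (mu K - 1)) ≤ mu K ^ (n + 1) * W := by
        calc mu K * XX K p q (k + n) + mu K * (cm / (mu K - 1))
            = mu K * (XX K p q (k + n) + cm / (mu K - 1)) := by ring
        _ ≤ mu K * (mu K ^ n * W) := hmul
        _ = mu K ^ (n + 1) * W := by ring
      linarith [hid]
  intro i hi
  have hci := claim i hi
  have hdiv : cm / (mu K - 1) ≤ (lam K - mu K) * (s + 1) / (mu K - 1) := by
    have hcmle : cm ≤ (lam K - mu K) * (s + 1) := by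
      have := aa_nonneg hK1 hK2 p q m
      rw [hcm, bb]
      nlinarith
    gcongr
  have hWle : W ≤ Ccon K * (s + 1) := by
    have : Ccon K * (s + 1) = 2 * lam K * (s + 1) + (lam K - mu K) * (s + 1) / (mu K - 1) := by
      rw [Ccon]; ring
    rw [this, hW]
    have : XX K p q k ≤ 2 * lam K * (s + 1) := by
      nlinarith [mul_nonneg hlam.le (show (0:ℝ) ≤ s by linarith)]
    linarith
  have hcd : 0 ≤ cm / (mu K - 1) := by positivity
  have hp : (0:ℝ) ≤ mu K ^ i := by positivity
  calc XX K p q (k + i) ≤ XX K p q (k + i) + cm / (mu K - 1) := by linarith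
  _ ≤ mu K ^ i * W := hci
  _ ≤ mu K ^ i * (Ccon K * (s + 1)) := mul_le_mul_of_nonneg_left hWle hp

lemma log_XX_le (k : ℕ) : Real.log (XX K p q k) ≤ (k : ℝ) * LL K := by
  rw [Real.log_le_iff_le_exp (XX_pos hK1 hK2 p q k)]
  calc XX K p q k ≤ lam K ^ k := XX_le_pow hK1 hK2 p q k
  _ = Real.exp ((k : ℝ) * LL K) := by rw [Real.exp_nat_mul, exp_LL hK1 hK2]

lemma log_XX_nonneg (k : ℕ) : 0 ≤ Real.log (XX K p q k) :=
  Real.log_nonneg (XX_ge_one hK1 hK2 p q k)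

set_option maxHeartbeats 1000000 in
lemma limsup_pt (m : ℕ) (hm : 1 ≤ m) :
    ∃ k : ℕ, m ≤ k ∧
      (LL K - 2 * LL K / (m : ℝ)) * (k : ℝ) ≤ Real.log (XX K p q (k)) := by
  obtain ⟨k0, hk0, h2, h3, h4⟩ := phi_stay hK1 hK2 p q m
  set κ := ⌈Real.log (tau K p q m + 1) / MM K⌉₊ with hκ
  set I := p m + m * (κ + Cdel K + 1) with hI
  have hPn : I + 3 = Pn K p m (tau K p q m) := by rw [hI, Pn]; ring
  have hb := h4 I (by omega)
  have hLL := LL_pos hK1 hK2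
  have hdel := del_pos hK1 hK2
  have ht0 := tau_nonneg hK1 hK2 p q m
  have hmR : (0:ℝ) < (m:ℝ) := by exact_mod_cast hm
  refine ⟨k0 + I, ?_, ?_⟩
  · have : m ≤ m * (κ + Cdel K + 1) := Nat.le_mul_of_pos_right m (by omega)
    omega
  have hXX : Real.exp ((I : ℝ) * LL K - (Cdel K : ℝ) * LL K) ≤ XX K p q (k0 + I) := by
    have hexpdel : Real.exp (-((Cdel K : ℝ) * LL K)) ≤ del K := by
      calc Real.exp (-((Cdel K : ℝ) * LL K)) ≤ Real.exp (Real.log (del K)) :=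
        Real.exp_le_exp.mpr (log_del_ge hK1 hK2)
      _ = del K := Real.exp_log hdel
    calc Real.exp ((I : ℝ) * LL K - (Cdel K : ℝ) * LL K)
        = Real.exp ((I : ℝ) * LL K) * Real.exp (-((Cdel K : ℝ) * LL K)) := by
          rw [← Real.exp_add]; ring_nf
    _ ≤ Real.exp ((I : ℝ) * LL K) * del K := by
        have : (0:ℝ) < Real.exp ((I : ℝ) * LL K) := Real.exp_pos _
        nlinarith
    _ = lam K ^ I * del K := by rw [Real.exp_nat_mul, exp_LL hK1 hK2]
    _ ≤ lam K ^ I * (del K * (tau K p q m + 1)) := by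
        have hp : (0:ℝ) ≤ lam K ^ I := pow_nonneg (lam_pos hK1 hK2).le I
        nlinarith [mul_nonneg (mul_nonneg hp hdel.le) ht0]
    _ ≤ XX K p q (k0 + I) := hb
  have hlog : (I : ℝ) * LL K - (Cdel K : ℝ) * LL K ≤ Real.log (XX K p q (k0 + I)) :=
    (Real.le_log_iff_exp_le (XX_pos hK1 hK2 p q _)).mpr hXX
  set d := 2 * LL K / (m : ℝ) with hdd
  have hd0 : 0 ≤ d := by positivity
  have hd : d * (m : ℝ) = 2 * LL K := by
    rw [hdd]; field_simp
  have hIge : (m : ℝ) * (k0 : ℝ) + (m : ℝ) * (Cdel K : ℝ) ≤ (I : ℝ) := by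
    have hk0' : (k0 : ℝ) ≤ (κ : ℝ) := by exact_mod_cast hk0
    have : (I : ℝ) = (p m : ℝ) + (m : ℝ) * ((κ : ℝ) + (Cdel K : ℝ) + 1) := by
      rw [hI]; push_cast; ring
    nlinarith [mul_le_mul_of_nonneg_left hk0' hmR.le,
      (by positivity : (0:ℝ) ≤ (p m : ℝ))]
  have hkey : 2 * LL K * (k0 : ℝ) + 2 * LL K * (Cdel K : ℝ) ≤ d * (I : ℝ) := by
    have h5 := mul_le_mul_of_nonneg_left hIge hd0
    have e1 : d * (m : ℝ) * (k0 : ℝ) = 2 * LL K * (k0 : ℝ) := by rw [hd]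
    have e2 : d * (m : ℝ) * (Cdel K : ℝ) = 2 * LL K * (Cdel K : ℝ) := by rw [hd]
    nlinarith
  have hcast : ((k0 + I : ℕ) : ℝ) = (k0 : ℝ) + (I : ℝ) := by push_cast; ring
  rw [hcast]
  nlinarith [hkey, hlog, mul_nonneg hLL.le (by positivity : (0:ℝ) ≤ (k0:ℝ)),
    mul_nonneg hLL.le (by positivity : (0:ℝ) ≤ (Cdel K : ℝ)),
    mul_nonneg hd0 (by positivity : (0:ℝ) ≤ (k0:ℝ))]

set_option maxHeartbeats 1000000 in
lemma liminf_pt (m : ℕ) (hm : 1 ≤ m) :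
    ∃ k : ℕ, m ≤ k ∧
      Real.log (XX K p q (k)) ≤ (MM K + 2 * LL K / (m : ℝ)) * (k : ℝ) := by
  obtain ⟨k0, hk0, h2, h3, h4⟩ := psi_stay hK1 hK2 p q m
  set J := ⌈Real.log (sig K p q m + 1) / MM K⌉₊ with hJ
  set I := q m + m * (J + CCc K + 1) with hI
  have hQn : I + 3 = Qn K q m (sig K p q m) := by rw [hI, Qn]; ring
  have hb := h4 I (by omega)
  have hLL := LL_pos hK1 hK2
  have hMM := MM_pos hK1 hK2
  have hs1 := sig_ge_one hK1 hK2 p q m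
  have hmR : (0:ℝ) < (m:ℝ) := by exact_mod_cast hm
  refine ⟨k0 + I, ?_, ?_⟩
  · have : m ≤ m * (J + CCc K + 1) := Nat.le_mul_of_pos_right m (by omega)
    omega
  have hCcon1 := Ccon_ge_one hK1 hK2
  have hXX : XX K p q (k0 + I) ≤
      Real.exp ((I : ℝ) * MM K + (CCc K : ℝ) * LL K + (k0 : ℝ) * LL K) := by
    have e1 : mu K ^ I = Real.exp ((I : ℝ) * MM K) := by
      rw [Real.exp_nat_mul, exp_MM hK1 hK2]
    have e2 : Ccon K ≤ Real.exp ((CCc K : ℝ) * LL K) := by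
      calc Ccon K = Real.exp (Real.log (Ccon K)) := (Real.exp_log (by linarith)).symm
      _ ≤ _ := Real.exp_le_exp.mpr (log_Ccon_le hK1 hK2)
    have e3 : sig K p q m + 1 ≤ Real.exp ((k0 : ℝ) * LL K) := by
      calc sig K p q m + 1 ≤ XX K p q k0 := by simpa using h2 0
      _ ≤ lam K ^ k0 := XX_le_pow hK1 hK2 p q k0
      _ = Real.exp ((k0 : ℝ) * LL K) := by rw [Real.exp_nat_mul, exp_LL hK1 hK2]
    calc XX K p q (k0 + I) ≤ mu K ^ I * (Ccon K * (sig K p q m + 1)) := hb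
    _ ≤ Real.exp ((I : ℝ) * MM K) *
        (Real.exp ((CCc K : ℝ) * LL K) * Real.exp ((k0 : ℝ) * LL K)) := by
        rw [e1]
        have p1 : (0:ℝ) < Real.exp ((I : ℝ) * MM K) := Real.exp_pos _
        have p2 : (0:ℝ) < Real.exp ((CCc K : ℝ) * LL K) := Real.exp_pos _
        have p3 : (0:ℝ) < Real.exp ((k0 : ℝ) * LL K) := Real.exp_pos _
        have hs0 : (0:ℝ) ≤ sig K p q m + 1 := by linarith
        have hCc0 : (0:ℝ) ≤ Ccon K := by linarith
        have hin : Ccon K * (sig K p q m + 1) ≤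
            Real.exp ((CCc K : ℝ) * LL K) * Real.exp ((k0 : ℝ) * LL K) := by
          calc Ccon K * (sig K p q m + 1) ≤ Ccon K * Real.exp ((k0 : ℝ) * LL K) := by
                nlinarith
          _ ≤ Real.exp ((CCc K : ℝ) * LL K) * Real.exp ((k0 : ℝ) * LL K) := by nlinarith
        have hexp0 : (0:ℝ) ≤ Real.exp ((I : ℝ) * MM K) := p1.le
        nlinarith [mul_le_mul_of_nonneg_left hin hexp0]
    _ = Real.exp ((I : ℝ) * MM K + (CCc K : ℝ) * LL K + (k0 : ℝ) * LL K) := by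
        rw [← Real.exp_add, ← Real.exp_add]
        ring_nf
  have hlog : Real.log (XX K p q (k0 + I)) ≤
      (I : ℝ) * MM K + (CCc K : ℝ) * LL K + (k0 : ℝ) * LL K :=
    (Real.log_le_iff_le_exp (XX_pos hK1 hK2 p q _)).mpr hXX
  set d := 2 * LL K / (m : ℝ) with hdd
  have hd0 : 0 ≤ d := by positivity
  have hd : d * (m : ℝ) = 2 * LL K := by rw [hdd]; field_simp
  have hIge : (m : ℝ) * (k0 : ℝ) + (m : ℝ) * (CCc K : ℝ) ≤ (I : ℝ) := by
    have hk0' : (k0 : ℝ) ≤ (J : ℝ) := by exact_mod_cast hk0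
    have : (I : ℝ) = (q m : ℝ) + (m : ℝ) * ((J : ℝ) + (CCc K : ℝ) + 1) := by
      rw [hI]; push_cast; ring
    nlinarith [mul_le_mul_of_nonneg_left hk0' hmR.le,
      (by positivity : (0:ℝ) ≤ (q m : ℝ))]
  have hkey : 2 * LL K * (k0 : ℝ) + 2 * LL K * (CCc K : ℝ) ≤ d * (I : ℝ) := by
    have h5 := mul_le_mul_of_nonneg_left hIge hd0
    have e1 : d * (m : ℝ) * (k0 : ℝ) = 2 * LL K * (k0 : ℝ) := by rw [hd]
    have e2 : d * (m : ℝ) * (CCc K : ℝ) = 2 * LL K * (CCc K : ℝ) := by rw [hd]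
    nlinarith
  have hcast : ((k0 + I : ℕ) : ℝ) = (k0 : ℝ) + (I : ℝ) := by push_cast; ring
  rw [hcast]
  nlinarith [hkey, hlog, mul_nonneg hLL.le (by positivity : (0:ℝ) ≤ (k0:ℝ)),
    mul_nonneg hLL.le (by positivity : (0:ℝ) ≤ (CCc K : ℝ)),
    mul_nonneg hd0 (by positivity : (0:ℝ) ≤ (k0:ℝ)),
    mul_nonneg hMM.le (by positivity : (0:ℝ) ≤ (k0:ℝ)),
    mul_nonneg hLL.le (by positivity : (0:ℝ) ≤ (I:ℝ))]

lemma dwell_phi (m : ℕ) :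
    ∃ k : ℕ, ∀ i < p m,
      tau K p q m < XX K p q (k + i) ∧ XX K p q (k + i) ≤ sig K p q m := by
  obtain ⟨k0, _, h2, h3, _⟩ := phi_stay hK1 hK2 p q m
  refine ⟨k0, fun i hi => ⟨?_, ?_⟩⟩
  · have := h2 i; linarith
  · have : i + 3 ≤ Pn K p m (tau K p q m) := by
      have : p m + 3 ≤ Pn K p m (tau K p q m) := by rw [Pn]; omega
      omega
    exact (h3 i this).le

lemma dwell_psi (m : ℕ) :
    ∃ k : ℕ, ∀ i < q m,
      sig K p q m < XX K p q (k + i) ∧ XX K p q (k + i) ≤ tau K p q (m + 1) := by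
  obtain ⟨k0, _, h2, h3, _⟩ := psi_stay hK1 hK2 p q m
  refine ⟨k0, fun i hi => ⟨?_, ?_⟩⟩
  · have := h2 i; linarith
  · have : i + 3 ≤ Qn K q m (sig K p q m) := by
      have : q m + 3 ≤ Qn K q m (sig K p q m) := by rw [Qn]; omega
      omega
    exact (h3 i this).le

lemma limsup_ge :
    LL K ≤ Filter.limsup (fun k : ℕ => (k : ℝ)⁻¹ * Real.log (XX K p q k)) Filter.atTop := by
  have hLL := LL_pos hK1 hK2
  have hub : ∀ k : ℕ, (k : ℝ)⁻¹ * Real.log (XX K p q k) ≤ LL K := by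
    intro k
    rcases Nat.eq_zero_or_pos k with hk | hk
    · subst hk; simp; linarith
    · have hkR : (0:ℝ) < (k:ℝ) := by exact_mod_cast hk
      have h1 := log_XX_le hK1 hK2 p q k
      calc (k : ℝ)⁻¹ * Real.log (XX K p q k) ≤ (k : ℝ)⁻¹ * ((k:ℝ) * LL K) := by
            have : (0:ℝ) ≤ (k:ℝ)⁻¹ := by positivity
            nlinarith
      _ = LL K := by field_simp
  have hbdd : Filter.IsBoundedUnder (· ≤ ·) Filter.atTop
      (fun k : ℕ => (k : ℝ)⁻¹ * Real.log (XX K p q k)) :=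
    Filter.isBoundedUnder_of ⟨LL K, hub⟩
  apply le_of_forall_sub_le
  intro ε hε
  apply Filter.le_limsup_of_frequently_le _ hbdd
  rw [Filter.frequently_atTop]
  intro N
  set m := N + 1 + ⌈2 * LL K / ε⌉₊ with hm
  have hm1 : 1 ≤ m := by omega
  obtain ⟨k, hk1, hk2⟩ := limsup_pt hK1 hK2 p q m hm1
  refine ⟨k, by omega, ?_⟩
  have hkR : (0:ℝ) < (k:ℝ) := by
    have : 1 ≤ k := le_trans hm1 hk1
    exact_mod_cast this
  have hmR : (0:ℝ) < (m:ℝ) := by exact_mod_cast hm1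
  have hdle : 2 * LL K / (m : ℝ) ≤ ε := by
    rw [div_le_iff₀ hmR]
    have h1 : 2 * LL K / ε ≤ (⌈2 * LL K / ε⌉₊ : ℝ) := Nat.le_ceil _
    have h2 : (⌈2 * LL K / ε⌉₊ : ℝ) ≤ (m : ℝ) := by
      have : ⌈2 * LL K / ε⌉₊ ≤ m := by omega
      exact_mod_cast this
    have h3 : 2 * LL K = 2 * LL K / ε * ε := by field_simp
    nlinarith
  have heq : (k:ℝ)⁻¹ * ((LL K - 2 * LL K / (m:ℝ)) * (k:ℝ)) = LL K - 2 * LL K / (m:ℝ) := by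
    field_simp
  have hmul := mul_le_mul_of_nonneg_left hk2 (show (0:ℝ) ≤ (k:ℝ)⁻¹ by positivity)
  rw [heq] at hmul
  linarith

lemma liminf_le' :
    Filter.liminf (fun k : ℕ => (k : ℝ)⁻¹ * Real.log (XX K p q k)) Filter.atTop ≤ MM K := by
  have hLL := LL_pos hK1 hK2
  have hlb : ∀ k : ℕ, 0 ≤ (k : ℝ)⁻¹ * Real.log (XX K p q k) := fun k =>
    mul_nonneg (by positivity) (log_XX_nonneg hK1 hK2 p q k)
  have hbdd : Filter.IsBoundedUnder (· ≥ ·) Filter.atTop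
      (fun k : ℕ => (k : ℝ)⁻¹ * Real.log (XX K p q k)) :=
    Filter.isBoundedUnder_of ⟨0, hlb⟩
  apply le_of_forall_sub_le
  intro ε hε
  have hmain : Filter.liminf (fun k : ℕ => (k : ℝ)⁻¹ * Real.log (XX K p q k))
      Filter.atTop ≤ MM K + ε := by
    apply Filter.liminf_le_of_frequently_le _ hbdd
    rw [Filter.frequently_atTop]
    intro N
    set m := N + 1 + ⌈2 * LL K / ε⌉₊ with hm
    have hm1 : 1 ≤ m := by omega
    obtain ⟨k, hk1, hk2⟩ := liminf_pt hK1 hK2 p q m hm1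
    refine ⟨k, by omega, ?_⟩
    have hkR : (0:ℝ) < (k:ℝ) := by
      have : 1 ≤ k := le_trans hm1 hk1
      exact_mod_cast this
    have hmR : (0:ℝ) < (m:ℝ) := by exact_mod_cast hm1
    have hdle : 2 * LL K / (m : ℝ) ≤ ε := by
      rw [div_le_iff₀ hmR]
      have h1 : 2 * LL K / ε ≤ (⌈2 * LL K / ε⌉₊ : ℝ) := Nat.le_ceil _
      have h2 : (⌈2 * LL K / ε⌉₊ : ℝ) ≤ (m : ℝ) := by
        have : ⌈2 * LL K / ε⌉₊ ≤ m := by omega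
        exact_mod_cast this
      have h3 : 2 * LL K = 2 * LL K / ε * ε := by field_simp
      nlinarith
    have heq : (k:ℝ)⁻¹ * ((MM K + 2 * LL K / (m:ℝ)) * (k:ℝ))
        = MM K + 2 * LL K / (m:ℝ) := by field_simp
    have hmul := mul_le_mul_of_nonneg_left hk2 (show (0:ℝ) ≤ (k:ℝ)⁻¹ by positivity)
    rw [heq] at hmul
    linarith
  linarith

end basic

end

end Stmt12Aux

/-- The oscillation phenomenon for the radial model of the example in Section 1.2:
for any prescribed dwell times `p_m, q_m` one can choose annuli radii `r_m, s_m` and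
matched constants `A_m, B_m` so that the radial orbit spends at least `p_m` consecutive
steps in `[s_m, r_m)` and at least `q_m` consecutive steps in `[r_{m+1}, s_m)`, and the
averaged doubly-logarithmic rate oscillates between `log(2/K)` and `log(2K)`. -/
theorem stmt12 (K : ℝ) (hK1 : 1 < K) (hK2 : K < 2) (p q : ℕ → ℕ) :
    ∃ (r s A B : ℕ → ℝ) (ρ : ℕ → ℝ),
      r 0 = 1 ∧
      (∀ m, 0 < r (m + 1) ∧ r (m + 1) < s m ∧ s m < r m) ∧
      Filter.Tendsto r Filter.atTop (nhds 0) ∧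
      A 0 = 1 ∧ (∀ m, 0 < A m) ∧ (∀ m, 0 < B m) ∧
      (∀ m, A m * s m ^ (2 * K) = B m * s m ^ (2 / K)) ∧
      (∀ m, B m * r (m + 1) ^ (2 / K) = A (m + 1) * r (m + 1) ^ (2 * K)) ∧
      ρ 0 ∈ Set.Ioo (0:ℝ) 1 ∧
      (∀ k m, ρ k ∈ Set.Ico (s m) (r m) → ρ (k + 1) = A m * ρ k ^ (2 * K)) ∧
      (∀ k m, ρ k ∈ Set.Ico (r (m + 1)) (s m) → ρ (k + 1) = B m * ρ k ^ (2 / K)) ∧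
      (∀ m, ∃ k : ℕ, ∀ i < p m, ρ (k + i) ∈ Set.Ico (s m) (r m)) ∧
      (∀ m, ∃ k : ℕ, ∀ i < q m, ρ (k + i) ∈ Set.Ico (r (m + 1)) (s m)) ∧
      Filter.liminf (fun k : ℕ => (k : ℝ)⁻¹ * Real.log (Real.log (1 / ρ k)))
          Filter.atTop ≤ Real.log (2 / K) ∧
      Real.log (2 * K) ≤
        Filter.limsup (fun k : ℕ => (k : ℝ)⁻¹ * Real.log (Real.log (1 / ρ k)))
          Filter.atTop := by
  open Stmt12Aux in
  refine ⟨fun m => Real.exp (-(tau K p q m)), fun m => Real.exp (-(sig K p q m)),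
    fun m => Real.exp (aa K p q m), fun m => Real.exp (bb K p q m),
    fun k => Real.exp (-(XX K p q k)), ?_, ?_, ?_, ?_, ?_, ?_, ?_, ?_, ?_, ?_, ?_, ?_, ?_, ?_, ?_⟩
  · simp [tau_zero]
  · intro m
    refine ⟨Real.exp_pos _, Real.exp_lt_exp.mpr ?_, Real.exp_lt_exp.mpr ?_⟩
    · have := sig_lt_tau_succ hK1 hK2 p q m; linarith
    · have := tau_lt_sig hK1 hK2 p q m; linarith
  · have h1 : Filter.Tendsto (fun m : ℕ => Real.exp (-(m:ℝ))) Filter.atTop (nhds 0) :=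
      Real.tendsto_exp_atBot.comp
        (Filter.tendsto_neg_atTop_atBot.comp tendsto_natCast_atTop_atTop)
    refine squeeze_zero (fun m => (Real.exp_pos _).le) (fun m => ?_) h1
    exact Real.exp_le_exp.mpr (by have := tau_ge_nat hK1 hK2 p q m; linarith)
  · simp [aa]
  · intro m; exact Real.exp_pos _
  · intro m; exact Real.exp_pos _
  · intro m
    rw [← Real.exp_mul, ← Real.exp_mul, ← Real.exp_add, ← Real.exp_add, Real.exp_eq_exp]
    unfold bb lam mu
    ring
  · intro m
    rw [← Real.exp_mul, ← Real.exp_mul, ← Real.exp_add, ← Real.exp_add, Real.exp_eq_exp]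
    have haa : aa K p q (m + 1) =
        aa K p q m + (lam K - mu K) * (tau K p q (m + 1) - sig K p q m) := rfl
    rw [haa]
    unfold bb lam mu
    ring
  · constructor
    · exact Real.exp_pos _
    · show Real.exp (-(XX K p q 0)) < 1
      rw [XX_zero]
      exact Real.exp_lt_one_iff.mpr (by norm_num)
  · intro k m hmem
    obtain ⟨hl, hr⟩ := hmem
    have hXle : XX K p q k ≤ sig K p q m := by
      have := Real.exp_le_exp.mp hl; linarith
    have hXgt : tau K p q m < XX K p q k := by
      have := Real.exp_lt_exp.mp hr; linarith
    have hstep : XX K p q (k + 1) = lam K * XX K p q k - aa K p q m := by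
      rcases lt_or_eq_of_le hXle with hlt | heq
      · rw [XX_succ, ff_phi hK1 hK2 p q hXgt.le hlt]
      · rw [XX_succ, heq, ff_psi hK1 hK2 p q (le_refl (sig K p q m))
          (sig_lt_tau_succ hK1 hK2 p q m)]
        unfold bb lam mu
        ring
    show Real.exp (-(XX K p q (k+1))) = Real.exp (aa K p q m) * Real.exp (-(XX K p q k)) ^ (2*K)
    rw [hstep, ← Real.exp_mul, ← Real.exp_add, Real.exp_eq_exp]
    unfold lam
    ring
  · intro k m hmem
    obtain ⟨hl, hr⟩ := hmem
    have hXle : XX K p q k ≤ tau K p q (m + 1) := by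
      have := Real.exp_le_exp.mp hl; linarith
    have hXgt : sig K p q m < XX K p q k := by
      have := Real.exp_lt_exp.mp hr; linarith
    have hstep : XX K p q (k + 1) = mu K * XX K p q k - bb K p q m := by
      rcases lt_or_eq_of_le hXle with hlt | heq
      · rw [XX_succ, ff_psi hK1 hK2 p q hXgt.le hlt]
      · rw [XX_succ, heq, ff_phi hK1 hK2 p q (le_refl _) (tau_lt_sig hK1 hK2 p q (m+1))]
        have haa : aa K p q (m + 1) =
            aa K p q m + (lam K - mu K) * (tau K p q (m + 1) - sig K p q m) := rfl
        rw [haa]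
        unfold bb
        ring
    show Real.exp (-(XX K p q (k+1))) = Real.exp (bb K p q m) * Real.exp (-(XX K p q k)) ^ (2/K)
    rw [hstep, ← Real.exp_mul, ← Real.exp_add, Real.exp_eq_exp]
    unfold mu
    ring
  · intro m
    obtain ⟨k, hk⟩ := dwell_phi hK1 hK2 p q m
    refine ⟨k, fun i hi => ?_⟩
    obtain ⟨h1, h2⟩ := hk i hi
    exact ⟨Real.exp_le_exp.mpr (by linarith), Real.exp_lt_exp.mpr (by linarith)⟩
  · intro m
    obtain ⟨k, hk⟩ := dwell_psi hK1 hK2 p q m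
    refine ⟨k, fun i hi => ?_⟩
    obtain ⟨h1, h2⟩ := hk i hi
    exact ⟨Real.exp_le_exp.mpr (by linarith), Real.exp_lt_exp.mpr (by linarith)⟩
  · have hfun : (fun k : ℕ => (k : ℝ)⁻¹ *
        Real.log (Real.log (1 / Real.exp (-(XX K p q k))))) =
        fun k : ℕ => (k : ℝ)⁻¹ * Real.log (XX K p q k) := by
      funext k
      rw [one_div, ← Real.exp_neg, neg_neg, Real.log_exp]
    rw [hfun]
    exact liminf_le' hK1 hK2 p q
  · have hfun : (fun k : ℕ => (k : ℝ)⁻¹ *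
        Real.log (Real.log (1 / Real.exp (-(XX K p q k))))) =
        fun k : ℕ => (k : ℝ)⁻¹ * Real.log (XX K p q k) := by
      funext k
      rw [one_div, ← Real.exp_neg, neg_neg, Real.log_exp]
    rw [hfun]
    exact limsup_ge hK1 hK2 p q
end

section
/- Let f : B(0,r') → B(0,r') ⊆ ℝⁿ be continuous with f(0) = 0, let l(r), L(r) be the min/max of |f| on the sphere of radius r, assumed increasing on (0,r'), and suppose there exists T ∈ (0,1) such that L^k(Tr) < T·l^k(r) for all r ∈ (0,r') and all k ≥ 1 (iterates of the radius functions). If x, y ∈ B(0,r') \ {0} satisfy: f^k(x), f^k(y) ≠ 0 for all k, f^k(x) → 0, f^k(y) → 0, and there exist integers k₀, N with |f^{k₀}(x)| < r' and |f^{k₀+N}(y)| < T·|f^{k₀}(x)|, then |f^{k+N}(y)| < |f^k(x)| for all k ≥ k₀. -/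
open Set Metric

/-- Iterates of a monotone self-map of a set are monotone on that set. -/
lemma monotoneOn_iterate {g : ℝ → ℝ} {s : Set ℝ} (hg : MonotoneOn g s)
    (hmaps : Set.MapsTo g s s) : ∀ m : ℕ, MonotoneOn g^[m] s := by
  intro m
  induction m with
  | zero => simpa using monotoneOn_id
  | succ m ih =>
      intro a ha b hb hab
      rw [Function.iterate_succ_apply', Function.iterate_succ_apply']
      exact hg (hmaps.iterate m ha) (hmaps.iterate m hb) (ih ha hb hab)

/-- Theorem 1.3(i) with explicit proof hypotheses: if the iterated radius functions
satisfy the separation `L^k(Tr) < T·l^k(r)`, then an orbit that falls a factor `T`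
behind another after `N` extra steps stays behind forever. -/
theorem stmt15 {n : ℕ} (r' : ℝ) (hr' : 0 < r')
    (f : EuclideanSpace ℝ (Fin n) → EuclideanSpace ℝ (Fin n)) (hf : Continuous f)
    (hmaps : ∀ z, ‖z‖ < r' → ‖f z‖ < r') (hf0 : f 0 = 0)
    (l L : ℝ → ℝ)
    (hl : ∀ r, l r = sInf ((fun z => ‖f z‖) '' Metric.sphere (0 : EuclideanSpace ℝ (Fin n)) r))
    (hL : ∀ r, L r = sSup ((fun z => ‖f z‖) '' Metric.sphere (0 : EuclideanSpace ℝ (Fin n)) r))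
    (hlmono : MonotoneOn l (Set.Ioo 0 r')) (hLmono : MonotoneOn L (Set.Ioo 0 r'))
    (T : ℝ) (hT0 : 0 < T) (hT1 : T < 1)
    (hsep : ∀ r ∈ Set.Ioo (0:ℝ) r', ∀ k : ℕ, 1 ≤ k → L^[k] (T * r) < T * l^[k] r)
    (x y : EuclideanSpace ℝ (Fin n))
    (hx0 : x ≠ 0) (hy0 : y ≠ 0) (hx : ‖x‖ < r') (hy : ‖y‖ < r')
    (hxne : ∀ k : ℕ, f^[k] x ≠ 0) (hyne : ∀ k : ℕ, f^[k] y ≠ 0)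
    (hxlim : Filter.Tendsto (fun k => f^[k] x) Filter.atTop (nhds 0))
    (hylim : Filter.Tendsto (fun k => f^[k] y) Filter.atTop (nhds 0))
    (k₀ N : ℕ)
    (hk₀ : ‖f^[k₀] x‖ < r')
    (hN : ‖f^[k₀ + N] y‖ < T * ‖f^[k₀] x‖) :
    ∀ k, k₀ ≤ k → ‖f^[k + N] y‖ < ‖f^[k] x‖ := by
  -- dispose of the degenerate dimension
  rcases Nat.eq_zero_or_pos n with hn | hn
  · subst hn
    exact absurd (Subsingleton.elim x 0) hx0
  -- spheres of positive radius are nonempty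
  have sphne : ∀ s : ℝ, 0 < s →
      ((fun z => ‖f z‖) '' Metric.sphere (0 : EuclideanSpace ℝ (Fin n)) s).Nonempty := by
    intro s hs
    refine ⟨‖f (EuclideanSpace.single ⟨0, hn⟩ s)‖, ⟨EuclideanSpace.single ⟨0, hn⟩ s, ?_, rfl⟩⟩
    simp [mem_sphere_iff_norm, EuclideanSpace.norm_single, abs_of_pos hs]
  have sphbdd : ∀ s : ℝ, BddAbove
      ((fun z => ‖f z‖) '' Metric.sphere (0 : EuclideanSpace ℝ (Fin n)) s) :=
    fun s => ((isCompact_sphere _ _).image hf.norm).bddAbove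
  -- pointwise sandwich: l ‖z‖ ≤ ‖f z‖ ≤ L ‖z‖
  have hlow : ∀ z : EuclideanSpace ℝ (Fin n), l ‖z‖ ≤ ‖f z‖ := by
    intro z
    rw [hl]
    exact csInf_le ⟨0, fun v ⟨w, _, hw⟩ => hw ▸ norm_nonneg _⟩
      ⟨z, by simp [mem_sphere_iff_norm], rfl⟩
  have hhigh : ∀ z : EuclideanSpace ℝ (Fin n), ‖f z‖ ≤ L ‖z‖ := by
    intro z
    rw [hL]
    exact le_csSup (sphbdd _) ⟨z, by simp [mem_sphere_iff_norm], rfl⟩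
  -- L is nonnegative on positive radii
  have hLnonneg : ∀ s : ℝ, 0 < s → 0 ≤ L s := by
    intro s hs
    obtain ⟨v, ⟨w, hw, hweq⟩⟩ := sphne s hs
    calc (0:ℝ) ≤ v := hweq ▸ norm_nonneg _
      _ ≤ L s := by rw [hL]; exact le_csSup (sphbdd _) ⟨w, hw, hweq⟩
  -- l is positive on (0, r')
  have hlpos : ∀ s ∈ Set.Ioo (0:ℝ) r', 0 < l s := by
    intro s hs
    have h1 := hsep s hs 1 le_rfl
    simp only [Function.iterate_one] at h1
    have h2 := (hLnonneg (T * s) (mul_pos hT0 hs.1)).trans_lt h1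
    nlinarith [h2]
  -- l ≤ L on positive radii (via a point on the sphere)
  have hlleL : ∀ s : ℝ, 0 < s → l s ≤ L s := by
    intro s hs
    have h := EuclideanSpace.norm_single (𝕜 := ℝ) (⟨0, hn⟩ : Fin n) s
    rw [Real.norm_eq_abs, abs_of_pos hs] at h
    calc l s = l ‖EuclideanSpace.single (⟨0, hn⟩ : Fin n) s‖ := by rw [h]
      _ ≤ ‖f (EuclideanSpace.single (⟨0, hn⟩ : Fin n) s)‖ := hlow _
      _ ≤ L ‖EuclideanSpace.single (⟨0, hn⟩ : Fin n) s‖ := hhigh _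
      _ = L s := by rw [h]
  -- L is strictly below r' on (0, r')
  have hLlt : ∀ s ∈ Set.Ioo (0:ℝ) r', L s < r' := by
    intro s hs
    have hmem := ((isCompact_sphere (0 : EuclideanSpace ℝ (Fin n)) s).image
      hf.norm).sSup_mem (sphne s hs.1)
    rw [hL]
    obtain ⟨w, hw, hweq⟩ := hmem
    rw [← hweq]
    rw [mem_sphere_iff_norm, sub_zero] at hw
    exact hmaps w (hw ▸ hs.2)
  -- L maps (0, r') into itself
  have hLmapsTo : Set.MapsTo L (Set.Ioo 0 r') (Set.Ioo 0 r') := fun s hs =>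
    ⟨(hlpos s hs).trans_le (hlleL s hs.1), hLlt s hs⟩
  -- l^[m] is positive on (0, r')
  have hliterpos : ∀ (m : ℕ) (s : ℝ), s ∈ Set.Ioo (0:ℝ) r' → 0 < l^[m] s := by
    intro m s hs
    rcases Nat.eq_zero_or_pos m with hm | hm
    · subst hm; simpa using hs.1
    have h1 := hsep s hs m hm
    have hTs : T * s ∈ Set.Ioo (0:ℝ) r' :=
      ⟨mul_pos hT0 hs.1, lt_trans (by nlinarith [hs.1, hT0, hT1]) hs.2⟩
    have hL0 : 0 ≤ L^[m] (T * s) := (hLmapsTo.iterate m hTs).1.le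
    have h2 := hL0.trans_lt h1
    nlinarith [h2]
  -- The orbit of a point with nonvanishing orbit, starting inside the ball, stays inside
  have horb : ∀ (z : EuclideanSpace ℝ (Fin n)), (∀ j : ℕ, f^[j] z ≠ 0) → ‖z‖ < r' →
      ∀ m : ℕ, ‖f^[m] z‖ ∈ Set.Ioo (0:ℝ) r' := by
    intro z hzne hz m
    induction m with
    | zero => exact ⟨norm_pos_iff.mpr (by simpa using hzne 0), by simpa using hz⟩
    | succ m ih =>
        rw [Function.iterate_succ_apply']
        have hne := hzne (m+1)
        rw [Function.iterate_succ_apply'] at hne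
        exact ⟨norm_pos_iff.mpr hne, hmaps _ ih.2⟩
  -- Lower sandwich: l^[m] ‖z‖ ≤ ‖f^[m] z‖
  have sandwich_low : ∀ (z : EuclideanSpace ℝ (Fin n)), (∀ j : ℕ, f^[j] z ≠ 0) → ‖z‖ < r' →
      ∀ m : ℕ, l^[m] ‖z‖ ≤ ‖f^[m] z‖ := by
    intro z hzne hz m
    have hz0 : ‖z‖ ∈ Set.Ioo (0:ℝ) r' := horb z hzne hz 0 |>.imp (by simp) (by simp)
    induction m with
    | zero => simp
    | succ m ih =>
        rw [Function.iterate_succ_apply', Function.iterate_succ_apply']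
        have h1 : l^[m] ‖z‖ ∈ Set.Ioo (0:ℝ) r' :=
          ⟨hliterpos m ‖z‖ hz0, lt_of_le_of_lt ih (horb z hzne hz m).2⟩
        calc l (l^[m] ‖z‖) ≤ l ‖f^[m] z‖ := hlmono h1 (horb z hzne hz m) ih
          _ ≤ ‖f (f^[m] z)‖ := hlow _
  -- Upper sandwich: ‖f^[m] z‖ ≤ L^[m] ‖z‖, together with L^[m] ‖z‖ ∈ (0, r')
  have sandwich_high : ∀ (z : EuclideanSpace ℝ (Fin n)), (∀ j : ℕ, f^[j] z ≠ 0) → ‖z‖ < r' →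
      ∀ m : ℕ, ‖f^[m] z‖ ≤ L^[m] ‖z‖ := by
    intro z hzne hz m
    have hz0 : ‖z‖ ∈ Set.Ioo (0:ℝ) r' := horb z hzne hz 0 |>.imp (by simp) (by simp)
    induction m with
    | zero => simp
    | succ m ih =>
        rw [Function.iterate_succ_apply', Function.iterate_succ_apply']
        calc ‖f (f^[m] z)‖ ≤ L ‖f^[m] z‖ := hhigh _
          _ ≤ L (L^[m] ‖z‖) :=
            hLmono (horb z hzne hz m) (hLmapsTo.iterate m hz0) ih
  -- main argument
  intro k hk
  obtain ⟨m, rfl⟩ := Nat.exists_eq_add_of_le hk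
  -- abbreviations
  set a := f^[k₀] x with ha
  set b := f^[k₀ + N] y with hb
  have haIoo : ‖a‖ ∈ Set.Ioo (0:ℝ) r' := ⟨norm_pos_iff.mpr (hxne k₀), hk₀⟩
  have hane : ∀ j : ℕ, f^[j] a ≠ 0 := by
    intro j; rw [ha, ← Function.iterate_add_apply]; exact hxne _
  have hbne : ∀ j : ℕ, f^[j] b ≠ 0 := by
    intro j; rw [hb, ← Function.iterate_add_apply]; exact hyne _
  have hbIoo : ‖b‖ ∈ Set.Ioo (0:ℝ) r' := by
    refine ⟨norm_pos_iff.mpr (hyne _), ?_⟩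
    calc ‖b‖ < T * ‖a‖ := hN
      _ < ‖a‖ := by nlinarith [haIoo.1]
      _ < r' := hk₀
  have hTaIoo : T * ‖a‖ ∈ Set.Ioo (0:ℝ) r' := by
    constructor
    · exact mul_pos hT0 haIoo.1
    · nlinarith [haIoo.1, haIoo.2]
  -- rewrite the iterates
  have hxk : f^[k₀ + m] x = f^[m] a := by rw [ha, Nat.add_comm, Function.iterate_add_apply]
  have hyk : f^[k₀ + m + N] y = f^[m] b := by
    rw [hb, ← Function.iterate_add_apply]
    congr 1
    omega
  rw [hxk, hyk]
  rcases Nat.eq_zero_or_pos m with hm | hm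
  · subst hm
    simp only [Function.iterate_zero, id_eq]
    calc ‖b‖ < T * ‖a‖ := hN
      _ < ‖a‖ := by nlinarith [haIoo.1]
  · calc ‖f^[m] b‖ ≤ L^[m] ‖b‖ := sandwich_high b hbne hbIoo.2 m
      _ ≤ L^[m] (T * ‖a‖) :=
        monotoneOn_iterate hLmono hLmapsTo m hbIoo hTaIoo hN.le
      _ < T * l^[m] ‖a‖ := hsep ‖a‖ haIoo m hm
      _ < l^[m] ‖a‖ := by nlinarith [hliterpos m ‖a‖ haIoo]
      _ ≤ ‖f^[m] a‖ := sandwich_low a hane haIoo.2 m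
end
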